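/- arXiv:math/0503367 — 2 statements merged into one kernel-verified Lean document; each statement's English description precedes it below -/
import Mathlib

section
/- Let k ≥ 2 be an integer and α ∈ ℝ be irrational, and let S_k = {n ∈ ℕ : {nᵏα} ∈ [1/4, 3/4]}, where {x} denotes the fractional part of x. Then S_k is NOT a set of k-recurrence: there exist a probability measure-preserving system (X, 𝒳, μ, T) and a set A ∈ 𝒳 with μ(A) > 0 such that for every n ∈ S_k, μ(A ∩ T⁻ⁿA ∩ T⁻²ⁿA ∩ ⋯ ∩ T⁻ᵏⁿA) = 0. -/
open MeasureTheory

section SkAux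

open Finset Function

variable {G : Type*} [AddCommGroup G]

lemma sk_fwdDiff_shift (h a : ℕ) (g : ℕ → G) :
    fwdDiff h (fun m => g (m + a)) = fun m => fwdDiff h g (m + a) := by
  funext m; simp only [fwdDiff]; rw [add_right_comm]

lemma sk_fwdDiff_iter_shift (h a j : ℕ) (g : ℕ → G) :
    (fwdDiff h)^[j] (fun m => g (m + a)) = fun m => (fwdDiff h)^[j] g (m + a) := by
  induction j generalizing g with
  | zero => rfl
  | succ j ih =>
      simp only [Function.iterate_succ_apply]
      rw [sk_fwdDiff_shift]
      exact ih (fwdDiff h g)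

lemma sk_fwdDiff_iter_sum {ι : Type*} (h j : ℕ) (s : Finset ι) (g : ι → ℕ → G) :
    (fwdDiff h)^[j] (fun m => ∑ i ∈ s, g i m) = fun m => ∑ i ∈ s, (fwdDiff h)^[j] (g i) m := by
  induction j generalizing g with
  | zero => rfl
  | succ j ih =>
      simp only [Function.iterate_succ_apply]
      have h1 : fwdDiff h (fun m => ∑ i ∈ s, g i m) = fun m => ∑ i ∈ s, fwdDiff h (g i) m := by
        funext m; simp only [fwdDiff, Finset.sum_sub_distrib]
      rw [h1]
      exact ih _

lemma sk_fwdDiff_one_step (n : ℕ) (f : ℕ → G) :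
    fwdDiff n f = fun m => ∑ j ∈ Finset.range n, fwdDiff 1 f (m + j) := by
  funext m
  have h := Finset.sum_range_sub (fun i => f (m + i)) n
  simp only [← Nat.add_assoc, Nat.add_zero] at h
  show f (m + n) - f m = ∑ j ∈ Finset.range n, (f (m + j + 1) - f (m + j))
  exact h.symm

lemma sk_key (k n : ℕ) (f : ℕ → G) (c : G) (hf : (fwdDiff 1)^[k] f = fun _ => c) :
    (fwdDiff n)^[k] f = fun _ => n ^ k • c := by
  induction k generalizing f with
  | zero => simpa using hf
  | succ k ih =>
      have h1 : (fwdDiff 1)^[k] (fwdDiff 1 f) = fun _ => c := by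
        rw [← Function.iterate_succ_apply]; exact hf
      have h2 := ih (fwdDiff 1 f) h1
      rw [Function.iterate_succ_apply, sk_fwdDiff_one_step, sk_fwdDiff_iter_sum]
      funext m
      have h3 : ∀ j : ℕ, (fwdDiff n)^[k] (fun m => fwdDiff 1 f (m + j))
          = fun m => (fwdDiff n)^[k] (fwdDiff 1 f) (m + j) :=
        fun j => sk_fwdDiff_iter_shift n j k (fwdDiff 1 f)
      simp only [h3, h2]
      simp [Finset.sum_const, Finset.card_range, smul_smul, pow_succ']

abbrev SkC : Type := AddCircle (1 : ℝ)

abbrev SkX (k : ℕ) : Type := Fin k → SkC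

instance : IsProbabilityMeasure (volume : Measure SkC) :=
  ⟨by rw [AddCircle.measure_univ]; simp⟩

instance (k : ℕ) : IsProbabilityMeasure (volume : Measure (SkX k)) := by
  rw [MeasureTheory.volume_pi]; infer_instance

end SkAux

/-- For `k ≥ 2` and irrational `α`, the set `S_k = {n : {n^k α} ∈ [1/4, 3/4]}` is
**not** a set of `k`-recurrence: there exist a probability measure-preserving system
`(X, 𝒳, μ, T)` and a measurable set `A` with `μ A > 0` such that for every `n ∈ S_k`,
`μ (A ∩ T⁻ⁿA ∩ ⋯ ∩ T⁻ᵏⁿA) = 0`. -/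
theorem Sk_not_setOfKRecurrence (k : ℕ) (hk : 2 ≤ k) (α : ℝ) (hα : Irrational α) :
    ∃ (X : Type) (_ : MeasurableSpace X) (μ : Measure X) (_ : IsProbabilityMeasure μ)
      (T : X → X), MeasurePreserving T μ μ ∧
      ∃ A : Set X, MeasurableSet A ∧ 0 < μ A ∧
        ∀ n ∈ {m : ℕ | Int.fract ((m : ℝ) ^ k * α) ∈ Set.Icc (1/4 : ℝ) (3/4)},
          μ (⋂ i ∈ Finset.range (k + 1), T^[i * n] ⁻¹' A) = 0 := by
  classical
  have hk0 : 0 < k := by omega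
  have habel : ∀ a b : SkC, a + b - a = b := fun a b => by abel
  set lastIdx : Fin k := ⟨k - 1, by omega⟩ with hlastdef
  set ε : ℝ := 1 / (2 ^ k * 8) with hεdef
  have hε : 0 < ε := by positivity
  set I : Set SkC := ((↑) : ℝ → SkC) '' Set.Ioo 0 ε with hIdef
  have hIopen : IsOpen I := QuotientAddGroup.isOpenMap_coe _ isOpen_Ioo
  set A : Set (SkX k) := Function.eval lastIdx ⁻¹' I with hAdef
  set T : SkX k → SkX k := fun y i => y i + if _ : (i : ℕ) = 0 then ((α : ℝ) : SkC)
      else y ⟨(i : ℕ) - 1, lt_of_le_of_lt (Nat.sub_le _ _) i.isLt⟩ with hTdef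
  have hTapp : ∀ (y : SkX k) (i : Fin k), T y i = y i + if _ : (i : ℕ) = 0 then ((α : ℝ) : SkC)
      else y ⟨(i : ℕ) - 1, lt_of_le_of_lt (Nat.sub_le _ _) i.isLt⟩ := fun y i => rfl
  refine ⟨SkX k, inferInstance, volume, inferInstance, T, ?_, A, ?_, ?_, ?_⟩
  · -- measure preserving
    set L0 : SkX k → SkX k := fun y i => y i + if _ : (i : ℕ) = 0 then 0
        else y ⟨(i : ℕ) - 1, lt_of_le_of_lt (Nat.sub_le _ _) i.isLt⟩ with hL0def
    have hL0app : ∀ (y : SkX k) (i : Fin k), L0 y i = y i + if _ : (i : ℕ) = 0 then 0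
        else y ⟨(i : ℕ) - 1, lt_of_le_of_lt (Nat.sub_le _ _) i.isLt⟩ := fun y i => rfl
    have hL0add : ∀ a b : SkX k, L0 (a + b) = L0 a + L0 b := by
      intro a b; funext i
      rw [Pi.add_apply, hL0app, hL0app, hL0app]
      by_cases h : (i : ℕ) = 0
      · rw [dif_pos h, dif_pos h, dif_pos h, Pi.add_apply]; abel
      · rw [dif_neg h, dif_neg h, dif_neg h, Pi.add_apply, Pi.add_apply]; abel
    set L : SkX k →+ SkX k := AddMonoidHom.mk' L0 hL0add with hLdef
    have hLcont : Continuous L0 := by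
      refine continuous_pi fun i => ?_
      by_cases h : (i : ℕ) = 0
      · simp only [hL0def, dif_pos h]
        exact (continuous_apply i).add continuous_const
      · simp only [hL0def, dif_neg h]
        exact (continuous_apply i).add (continuous_apply _)
    have hLsurj : Function.Surjective L0 := by
      intro y
      set y' : ℕ → SkC := fun m => if h : m < k then y ⟨m, h⟩ else 0 with hy'def
      set v : ℕ → SkC := fun m => Nat.rec (y' 0) (fun m vm => y' (m + 1) - vm) m with hvdef
      refine ⟨fun i => v i, ?_⟩
      funext i
      rcases i with ⟨iv, hiv⟩
      show v iv + (if _ : iv = 0 then 0 else v (iv - 1)) = y ⟨iv, hiv⟩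
      cases iv with
      | zero =>
          rw [dif_pos rfl, add_zero]
          show y' 0 = y ⟨0, hiv⟩
          rw [hy'def]; exact dif_pos hiv
      | succ m =>
          rw [dif_neg (Nat.succ_ne_zero m)]
          show (y' (m + 1) - v m) + v m = y ⟨m + 1, hiv⟩
          have h1 : (y' (m + 1) - v m) + v m = y' (m + 1) := by abel
          rw [h1, hy'def]
          exact dif_pos hiv
    have hLm : Measurable L0 := hLcont.measurable
    have hcoeL : ⇑L = L0 := rfl
    haveI hpm : IsProbabilityMeasure ((volume : Measure (SkX k)).map L0) :=
      Measure.isProbabilityMeasure_map hLm.aemeasurable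
    haveI hhm : ((volume : Measure (SkX k)).map L0).IsAddHaarMeasure := by
      have h := Measure.isAddHaarMeasure_map_of_isFiniteMeasure (volume : Measure (SkX k)) L
        (hcoeL ▸ hLcont) (hcoeL ▸ hLsurj)
      rwa [hcoeL] at h
    have hmap : (volume : Measure (SkX k)).map L0 = volume :=
      Measure.isAddHaarMeasure_eq_of_isProbabilityMeasure _ _
    set cvec : SkX k := fun i => if (i : ℕ) = 0 then ((α : ℝ) : SkC) else 0 with hcvecdef
    have hcvecapp : ∀ i : Fin k, cvec i = if (i : ℕ) = 0 then ((α : ℝ) : SkC) else 0 :=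
      fun _ => rfl
    have hT : T = (cvec + ·) ∘ L0 := by
      funext y i
      rw [Function.comp_apply, hTapp, Pi.add_apply, hL0app, hcvecapp]
      by_cases h : (i : ℕ) = 0
      · rw [dif_pos h, dif_pos h, if_pos h]; abel
      · rw [dif_neg h, dif_neg h, if_neg h]; abel
    rw [hT]
    exact (measurePreserving_add_left volume cvec).comp ⟨hLm, hmap⟩
  · exact measurable_pi_apply lastIdx hIopen.measurableSet
  · -- positive measure
    have hXA : (volume : Measure (SkX k)) A = volume I := by
      rw [hAdef, MeasureTheory.volume_pi, Set.eval_preimage, Measure.pi_pi]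
      rw [Finset.prod_eq_single lastIdx
        (fun b _ hb => by rw [Function.update_of_ne hb]; exact measure_univ)
        (fun h => absurd (Finset.mem_univ _) h)]
      rw [Function.update_self]
    rw [hXA]
    exact hIopen.measure_pos volume
      ⟨((ε / 2 : ℝ) : SkC), ⟨ε / 2, ⟨half_pos hε, half_lt_self hε⟩, rfl⟩⟩
  · -- recurrence fails
    intro n hn
    have hmem : Int.fract ((n : ℝ) ^ k * α) ∈ Set.Icc (1/4 : ℝ) (3/4) := hn
    have hempty : (⋂ i ∈ Finset.range (k + 1), T^[i * n] ⁻¹' A) = (∅ : Set (SkX k)) := by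
      rw [Set.eq_empty_iff_forall_notMem]
      intro x hx
      simp only [Set.mem_iInter, Set.mem_preimage, hAdef, hIdef, Set.mem_image] at hx
      -- the chain of coordinates
      have hchain : ∀ (j : ℕ) (hj : j < k),
          (fwdDiff 1)^[j + 1] (fun m => T^[m] x ⟨j, hj⟩) = fun _ => ((α : ℝ) : SkC) := by
        intro j
        induction j with
        | zero =>
            intro hj
            funext m
            simp only [Function.iterate_succ_apply, Function.iterate_zero_apply]
            show T^[m + 1] x ⟨0, hj⟩ - T^[m] x ⟨0, hj⟩ = ((α : ℝ) : SkC)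
            rw [Function.iterate_succ_apply', hTapp, dif_pos rfl]
            exact habel _ _
        | succ j ih =>
            intro hj
            have hj' : j < k := Nat.lt_of_succ_lt hj
            have h1 : fwdDiff 1 (fun m => T^[m] x ⟨j + 1, hj⟩) = fun m => T^[m] x ⟨j, hj'⟩ := by
              funext m
              show T^[m + 1] x ⟨j + 1, hj⟩ - T^[m] x ⟨j + 1, hj⟩ = T^[m] x ⟨j, hj'⟩
              rw [Function.iterate_succ_apply', hTapp, dif_neg (Nat.succ_ne_zero j)]
              exact habel _ _
            rw [Function.iterate_succ_apply, h1]
            exact ih hj'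
      set f : ℕ → SkC := fun m => T^[m] x lastIdx with hfdef
      have hf : (fwdDiff 1)^[k] f = fun _ => ((α : ℝ) : SkC) := by
        have h := hchain (k - 1) (by omega)
        rwa [Nat.sub_add_cancel (by omega : 1 ≤ k)] at h
      have hkey := sk_key k n f _ hf
      have hsum : ∑ i ∈ Finset.range (k + 1), ((-1 : ℤ) ^ (k - i) * (k.choose i : ℤ)) • f (i * n)
          = n ^ k • ((α : ℝ) : SkC) := by
        have h := fwdDiff_iter_eq_sum_shift n f k 0
        rw [hkey] at h
        simpa [smul_eq_mul] using h.symm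
      have hlift : ∀ i : ℕ, ∃ t : ℝ, i ∈ Finset.range (k + 1) →
          t ∈ Set.Ioo (0 : ℝ) ε ∧ ((t : ℝ) : SkC) = f (i * n) := by
        intro i
        by_cases hi : i ∈ Finset.range (k + 1)
        · obtain ⟨t, ht, htc⟩ := hx i hi
          exact ⟨t, fun _ => ⟨ht, htc⟩⟩
        · exact ⟨0, fun h => absurd h hi⟩
      choose t ht using hlift
      set coeC : ℝ →+ SkC := AddMonoidHom.mk' (fun r => ((r : ℝ) : SkC)) (fun a b => rfl)
        with hcoeCdef
      set s : ℝ := ∑ i ∈ Finset.range (k + 1), ((-1 : ℤ) ^ (k - i) * (k.choose i : ℤ)) • t i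
        with hsdef
      have hcoeCapp : ∀ r : ℝ, coeC r = ((r : ℝ) : SkC) := fun _ => rfl
      have hcoes : coeC s = n ^ k • ((α : ℝ) : SkC) := by
        rw [hsdef, map_sum]
        rw [← hsum]
        refine Finset.sum_congr rfl fun i hi => ?_
        rw [map_zsmul, hcoeCapp, (ht i hi).2]
      have hrhs : coeC ((n : ℝ) ^ k * α) = n ^ k • ((α : ℝ) : SkC) := by
        have h1 : ((n : ℝ) ^ k * α) = (n ^ k : ℕ) • α := by
          push_cast [nsmul_eq_mul]; ring
        rw [h1, map_nsmul]
        rfl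
      have hzero : coeC (s - (n : ℝ) ^ k * α) = 0 := by
        rw [map_sub, hcoes, hrhs, sub_self]
      have hzero' : ((s - (n : ℝ) ^ k * α : ℝ) : SkC) = 0 := hzero
      rw [AddCircle.coe_eq_zero_iff] at hzero'
      obtain ⟨z, hz⟩ := hzero'
      have hfract : Int.fract ((n : ℝ) ^ k * α) = Int.fract s := by
        rw [Int.fract_eq_fract]
        refine ⟨-z, ?_⟩
        have h1 : (z : ℝ) = s - (n : ℝ) ^ k * α := by
          rw [← hz]; simp
        push_cast
        linarith
      have hts : ∀ i ∈ Finset.range (k + 1),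
          |((-1 : ℤ) ^ (k - i) * (k.choose i : ℤ)) • t i| ≤ (k.choose i : ℝ) * ε := by
        intro i hi
        have h1 := (ht i hi).1
        rw [zsmul_eq_mul, abs_mul]
        have h2 : |(((-1 : ℤ) ^ (k - i) * (k.choose i : ℤ) : ℤ) : ℝ)| = (k.choose i : ℝ) := by
          push_cast
          rw [abs_mul, abs_pow, abs_neg, abs_one, one_pow, one_mul,
            abs_of_nonneg (by positivity : (0:ℝ) ≤ (k.choose i : ℝ))]
        rw [h2]
        have h3 : |t i| ≤ ε := by
          rw [abs_of_pos h1.1]; exact h1.2.le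
        exact mul_le_mul_of_nonneg_left h3 (by positivity)
      have hsbound : |s| ≤ (2 : ℝ) ^ k * ε := by
        calc |s| ≤ ∑ i ∈ Finset.range (k + 1),
            |((-1 : ℤ) ^ (k - i) * (k.choose i : ℤ)) • t i| := Finset.abs_sum_le_sum_abs _ _
          _ ≤ ∑ i ∈ Finset.range (k + 1), (k.choose i : ℝ) * ε := Finset.sum_le_sum hts
          _ = (∑ i ∈ Finset.range (k + 1), (k.choose i : ℝ)) * ε := by rw [Finset.sum_mul]
          _ = (2 : ℝ) ^ k * ε := by
              rw [← Nat.cast_sum, Nat.sum_range_choose]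
              push_cast
              ring
      have hε8 : (2 : ℝ) ^ k * ε = 1 / 8 := by
        rw [hεdef]
        field_simp
      rw [hε8] at hsbound
      have habs := abs_le.mp hsbound
      rw [hfract] at hmem
      rcases le_or_gt 0 s with hs0 | hs0
      · have heq : Int.fract s = s := Int.fract_eq_self.mpr ⟨hs0, by linarith⟩
        rw [heq] at hmem
        have h14 := hmem.1
        linarith
      · have heq : Int.fract s = s + 1 := by
          have h1 : Int.fract (s + 1) = Int.fract s := Int.fract_add_one s
          rw [← h1, Int.fract_eq_self.mpr ⟨by linarith, by linarith⟩]
        rw [heq] at hmem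
        have h34 := hmem.2
        linarith
    rw [hempty]
    exact measure_empty
end

section
/- Let p ∈ ℝ[t] be a polynomial of degree ≥ 1 whose leading coefficient is irrational. Then (1/(N−M)) ∑_{n=M+1}^N e^{2πi p(n)} → 0 as N − M → ∞; that is, for every ε > 0 there exists K such that for all integers M < N with N − M ≥ K, |(1/(N−M)) ∑_{n=M+1}^N e^{2πi p(n)}| ≤ ε. -/
/-!
Induction on the degree. In degree one the sums are geometric, hence bounded independently of
their length. In higher degree, van der Corput's inequality bounds a sum of `L` terms of modulus
at most `1` by `L * √(1 / H + δ) + 2 * H`, where `δ * L` bounds the correlation sums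
`∑ f (n + h₁) * conj (f (n + h₂))` for `h₁ ≠ h₂ < H`. For `f n = e (p n)` these are exponential
sums of `p (n + h) - p n`, which has one degree less and irrational leading coefficient
`deg p * h * p.leadingCoeff`.
-/

open Finset Filter Polynomial Complex Real ComplexConjugate

namespace Weyl

noncomputable def e (x : ℝ) : ℂ := Complex.exp (2 * π * I * x)

lemma norm_e (x : ℝ) : ‖e x‖ = 1 := by
  rw [e, Complex.norm_exp]; simp

lemma e_add (x y : ℝ) : e (x + y) = e x * e y := by
  rw [e, e, e, ← Complex.exp_add]; push_cast; ring_nf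

lemma e_natCast_mul (n : ℕ) (x : ℝ) : e (n * x) = e x ^ n := by
  rw [e, e, ← Complex.exp_nat_mul]; push_cast; ring_nf

lemma e_mul_conj (x y : ℝ) : e x * conj (e y) = e (x - y) := by
  rw [e, e, e, ← Complex.exp_conj, ← Complex.exp_add]
  simp only [map_mul, conj_I, conj_ofReal, map_ofNat]
  push_cast; ring_nf

lemma e_ne_one {x : ℝ} (hx : Irrational x) : e x ≠ 1 := by
  intro h
  obtain ⟨n, hn⟩ := Complex.exp_eq_one_iff.1 h
  have : (x : ℂ) = n := mul_right_cancel₀ two_pi_I_ne_zero (by rw [← hn]; ring)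
  exact hx.ne_int n (mod_cast this)

def HasUniformlySmallAverages (f : ℕ → ℂ) : Prop :=
  ∀ ε > 0, ∀ᶠ L : ℕ in atTop, ∀ M, ‖∑ n ∈ range L, f (M + n)‖ ≤ ε * L

namespace HasUniformlySmallAverages

variable {f : ℕ → ℂ}

lemma of_norm_sum_le (C : ℝ) (hC : ∀ M L, ‖∑ n ∈ range L, f (M + n)‖ ≤ C) :
    HasUniformlySmallAverages f := by
  intro ε hε
  filter_upwards [tendsto_natCast_atTop_atTop.eventually_ge_atTop (C / ε)] with L hL M
  exact (hC M L).trans ((div_le_iff₀' hε).1 hL)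

lemma comp_add_right (hf : HasUniformlySmallAverages f) (k : ℕ) :
    HasUniformlySmallAverages (fun n => f (n + k)) := by
  intro ε hε
  filter_upwards [hf ε hε] with L hL M
  simpa only [add_right_comm M] using hL (M + k)

lemma star (hf : HasUniformlySmallAverages f) :
    HasUniformlySmallAverages (fun n => conj (f n)) := by
  intro ε hε
  filter_upwards [hf ε hε] with L hL M
  rw [← map_sum, Complex.norm_conj]
  exact hL M

end HasUniformlySmallAverages

lemma norm_sum_range_pow_le {K : Type*} [NormedField K] {z : K} (hz : ‖z‖ ≤ 1) (hz1 : z ≠ 1)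
    (M L : ℕ) : ‖∑ n ∈ range L, z ^ (M + n)‖ ≤ 2 / ‖z - 1‖ := by
  simp_rw [pow_add, ← mul_sum, geom_sum_eq hz1, norm_mul, norm_div]
  have hzL : ‖z ^ L - 1‖ ≤ 2 := (norm_sub_le _ _).trans (by
    rw [norm_pow, norm_one]; linarith [pow_le_one₀ (norm_nonneg z) hz (n := L)])
  calc ‖z ^ M‖ * (‖z ^ L - 1‖ / ‖z - 1‖) ≤ 1 * (2 / ‖z - 1‖) := by
        gcongr
        rw [norm_pow]
        exact pow_le_one₀ (norm_nonneg z) hz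
  _ = 2 / ‖z - 1‖ := one_mul _

lemma norm_sum_range_shift_sub_le {E : Type*} [SeminormedAddCommGroup E] {f : ℕ → E}
    (hf : ∀ n, ‖f n‖ ≤ 1) (M L h : ℕ) :
    ‖∑ n ∈ range L, f (M + n + h) - ∑ n ∈ range L, f (M + n)‖ ≤ 2 * h := by
  have e₁ := sum_range_add (fun k => f (M + k)) L h
  have e₂ := sum_range_add (fun k => f (M + k)) h L
  have hdiff : ∑ n ∈ range L, f (M + n + h) - ∑ n ∈ range L, f (M + n)
      = ∑ n ∈ range h, f (M + (L + n)) - ∑ n ∈ range h, f (M + n) := by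
    rw [add_comm h L] at e₂
    simp only [add_assoc M, add_comm _ h, sub_eq_sub_iff_add_eq_add]
    rw [add_comm, ← e₂, e₁, add_comm]
  rw [hdiff]
  refine (norm_sub_le _ _).trans ?_
  have hsum : ∀ g : ℕ → E, (∀ n, ‖g n‖ ≤ 1) → ‖∑ n ∈ range h, g n‖ ≤ h := fun g hg =>
    (norm_sum_le_of_le _ fun n _ => hg n).trans (by simp)
  linarith [hsum _ fun n => hf (M + (L + n)), hsum _ fun n => hf (M + n)]

lemma ofReal_sum_norm_sum_sq {ι κ : Type*} (s : Finset ι) (t : Finset κ) (F : ι → κ → ℂ) :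
    ((∑ n ∈ s, ‖∑ h ∈ t, F n h‖ ^ 2 : ℝ) : ℂ)
      = ∑ h₁ ∈ t, ∑ h₂ ∈ t, ∑ n ∈ s, F n h₁ * conj (F n h₂) := by
  push_cast
  simp_rw [← mul_conj', map_sum, sum_mul_sum]
  rw [sum_comm]
  exact sum_congr rfl fun _ _ => sum_comm

lemma sum_norm_sum_shift_sq_le {f : ℕ → ℂ} (hf : ∀ n, ‖f n‖ ≤ 1) {H : ℕ} {δ : ℝ} (hδ : 0 ≤ δ)
    (M L : ℕ) (hcorr : ∀ h₁ < H, ∀ h₂ < H, h₁ ≠ h₂ →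
      ‖∑ n ∈ range L, f (M + n + h₁) * conj (f (M + n + h₂))‖ ≤ δ * L) :
    ∑ n ∈ range L, ‖∑ h ∈ range H, f (M + n + h)‖ ^ 2 ≤ L * (H + H ^ 2 * δ) := by
  have hpair : ∀ h₁ ∈ range H, ∀ h₂ ∈ range H,
      ‖∑ n ∈ range L, f (M + n + h₁) * conj (f (M + n + h₂))‖
        ≤ (if h₁ = h₂ then (L : ℝ) else 0) + δ * L := by
    intro h₁ hh₁ h₂ hh₂
    split_ifs with hh
    · subst hh
      have : ‖∑ n ∈ range L, f (M + n + h₁) * conj (f (M + n + h₁))‖ ≤ L :=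
        (norm_sum_le_of_le _ (n := fun _ => 1) fun n _ => by
          rw [norm_mul, Complex.norm_conj]
          exact mul_le_one₀ (hf _) (norm_nonneg _) (hf _)).trans (by simp)
      exact le_add_of_le_of_nonneg this (by positivity)
    · rw [zero_add]
      exact hcorr h₁ (mem_range.1 hh₁) h₂ (mem_range.1 hh₂) hh
  calc ∑ n ∈ range L, ‖∑ h ∈ range H, f (M + n + h)‖ ^ 2
      = ‖((∑ n ∈ range L, ‖∑ h ∈ range H, f (M + n + h)‖ ^ 2 : ℝ) : ℂ)‖ := by
        rw [norm_real, Real.norm_of_nonneg (by positivity)]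
    _ ≤ ∑ h₁ ∈ range H, ∑ h₂ ∈ range H,
          ((if h₁ = h₂ then (L : ℝ) else 0) + δ * L) := by
        rw [ofReal_sum_norm_sum_sq]
        refine (norm_sum_le _ _).trans (sum_le_sum fun h₁ hh₁ => ?_)
        exact (norm_sum_le _ _).trans (sum_le_sum fun h₂ hh₂ => hpair h₁ hh₁ h₂ hh₂)
    _ = L * (H + H ^ 2 * δ) := by
        rw [sum_congr rfl fun h₁ hh₁ => by rw [sum_add_distrib, sum_ite_eq, if_pos hh₁]]
        simp only [sum_add_distrib, sum_const, card_range, nsmul_eq_mul]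
        ring

theorem norm_sum_range_le_van_der_corput {f : ℕ → ℂ} (hf : ∀ n, ‖f n‖ ≤ 1) {H : ℕ} (hH : 0 < H)
    {δ : ℝ} (hδ : 0 ≤ δ) (M L : ℕ) (hcorr : ∀ h₁ < H, ∀ h₂ < H, h₁ ≠ h₂ →
      ‖∑ n ∈ range L, f (M + n + h₁) * conj (f (M + n + h₂))‖ ≤ δ * L) :
    ‖∑ n ∈ range L, f (M + n)‖ ≤ L * √(1 / H + δ) + 2 * H := by
  set S := ∑ n ∈ range L, f (M + n)
  -- `T` sums `H` shifted copies of `S`, at a cost of `2 * H ^ 2`; Cauchy–Schwarz expands `‖T‖ ^ 2`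
  -- into the correlation sums.
  set T := ∑ n ∈ range L, ∑ h ∈ range H, f (M + n + h)
  have hH' : (0 : ℝ) < H := Nat.cast_pos.2 hH
  have hshift : ‖T - H * S‖ ≤ 2 * H ^ 2 := by
    have hTS : T - H * S = ∑ h ∈ range H, (∑ n ∈ range L, f (M + n + h) - S) := by
      rw [sum_sub_distrib, sum_const, card_range, nsmul_eq_mul, sum_comm]
    calc ‖T - H * S‖ ≤ ∑ _h ∈ range H, 2 * (H : ℝ) := by
          rw [hTS]
          refine norm_sum_le_of_le _ fun h hh => (norm_sum_range_shift_sub_le hf M L h).trans ?_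
          gcongr
          exact (mem_range.1 hh).le
      _ = 2 * H ^ 2 := by rw [sum_const, card_range, nsmul_eq_mul]; ring
  have hT : ‖T‖ ≤ L * H * √(1 / H + δ) := by
    have hsq : (∑ n ∈ range L, ‖∑ h ∈ range H, f (M + n + h)‖) ^ 2
        ≤ (L * H * √(1 / H + δ)) ^ 2 :=
      calc _ ≤ L * ∑ n ∈ range L, ‖∑ h ∈ range H, f (M + n + h)‖ ^ 2 := by
            simpa using sq_sum_le_card_mul_sum_sq (s := range L)
              (f := fun n => ‖∑ h ∈ range H, f (M + n + h)‖)
        _ ≤ L * (L * (H + H ^ 2 * δ)) := by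
            gcongr
            exact sum_norm_sum_shift_sq_le hf hδ M L hcorr
        _ = (L * H * √(1 / H + δ)) ^ 2 := by
            rw [mul_pow, Real.sq_sqrt (by positivity)]
            field_simp
    exact (norm_sum_le _ _).trans ((pow_le_pow_iff_left₀ (by positivity) (by positivity)
      two_ne_zero).1 hsq)
  have hHS : H * ‖S‖ ≤ H * (L * √(1 / H + δ) + 2 * H) :=
    calc H * ‖S‖ = ‖T - (T - H * S)‖ := by rw [sub_sub_cancel, norm_mul, Complex.norm_natCast]
      _ ≤ ‖T‖ + ‖T - H * S‖ := norm_sub_le _ _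
      _ ≤ L * H * √(1 / H + δ) + 2 * H ^ 2 := add_le_add hT hshift
      _ = H * (L * √(1 / H + δ) + 2 * H) := by ring
  exact le_of_mul_le_mul_left hHS hH'

lemma hasUniformlySmallAverages_mul_conj_of_ne {f : ℕ → ℂ}
    (hcorr : ∀ h, 0 < h → HasUniformlySmallAverages (fun n => f (n + h) * conj (f n)))
    {h₁ h₂ : ℕ} (hne : h₁ ≠ h₂) :
    HasUniformlySmallAverages (fun n => f (n + h₁) * conj (f (n + h₂))) := by
  have hlt : ∀ {a b : ℕ}, b < a →
      HasUniformlySmallAverages (fun n => f (n + a) * conj (f (n + b))) := by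
    intro a b hab
    obtain ⟨k, rfl⟩ := Nat.exists_eq_add_of_lt hab
    convert (hcorr (k + 1) k.succ_pos).comp_add_right b using 4
    ring
  rcases hne.lt_or_gt with h | h
  · simpa [mul_comm] using (hlt h).star
  · exact hlt h

theorem HasUniformlySmallAverages.of_mul_conj_shift {f : ℕ → ℂ} (hf : ∀ n, ‖f n‖ ≤ 1)
    (hcorr : ∀ h, 0 < h → HasUniformlySmallAverages (fun n => f (n + h) * conj (f n))) :
    HasUniformlySmallAverages f := by
  intro ε hε
  obtain ⟨H, hH⟩ := exists_nat_gt (8 / ε ^ 2)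
  have hHpos : 0 < H := by exact_mod_cast (by positivity : (0 : ℝ) < 8 / ε ^ 2).trans hH
  have hpairs : ∀ᶠ L : ℕ in atTop, ∀ h₁ ∈ range H, ∀ h₂ ∈ range H, h₁ ≠ h₂ → ∀ M,
      ‖∑ n ∈ range L, f (M + n + h₁) * conj (f (M + n + h₂))‖ ≤ ε ^ 2 / 8 * L := by
    simp only [eventually_all_finset]
    intro h₁ _ h₂ _
    by_cases hne : h₁ = h₂
    · exact Eventually.of_forall fun _ h => absurd hne h
    · filter_upwards
        [hasUniformlySmallAverages_mul_conj_of_ne hcorr hne (ε ^ 2 / 8) (by positivity)]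
        with L hL using fun _ => hL
  filter_upwards [hpairs, tendsto_natCast_atTop_atTop.eventually_ge_atTop (4 * H / ε)]
    with L hL hLH M
  refine (norm_sum_range_le_van_der_corput hf hHpos (by positivity) M L
    fun h₁ hh₁ h₂ hh₂ hne => hL h₁ (mem_range.2 hh₁) h₂ (mem_range.2 hh₂) hne M).trans ?_
  have hsqrt : √(1 / H + ε ^ 2 / 8) ≤ ε / 2 := by
    rw [Real.sqrt_le_left (by positivity)]
    have : 1 / (H : ℝ) ≤ ε ^ 2 / 8 := by
      rw [div_lt_iff₀ (by positivity)] at hH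
      rw [div_le_div_iff₀ (by positivity) (by norm_num)]
      linarith
    linarith
  have : 2 * (H : ℝ) ≤ ε / 2 * L := by rw [div_le_iff₀ hε] at hLH; linarith
  nlinarith

section TaylorShift

variable {R : Type*} [CommRing R]

lemma coeff_taylor_sub_self (p : R[X]) (r : R) (k : ℕ) :
    (taylor r p - p).coeff k = (hasseDeriv k p).eval r - (hasseDeriv k p).eval 0 := by
  nth_rewrite 2 [← taylor_zero p]
  rw [coeff_sub, taylor_coeff, taylor_coeff]

lemma natDegree_taylor_sub_self_le (p : R[X]) (r : R) :
    (taylor r p - p).natDegree ≤ p.natDegree - 1 := by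
  refine natDegree_le_iff_coeff_eq_zero.2 fun k hk => ?_
  have hconst : (hasseDeriv k p).natDegree = 0 := by
    have := natDegree_hasseDeriv_le p k
    omega
  rw [coeff_taylor_sub_self, eq_C_of_natDegree_eq_zero hconst, eval_C, eval_C, sub_self]

lemma coeff_taylor_sub_self_of_natDegree_eq_succ {p : R[X]} {d : ℕ} (hp : p.natDegree = d + 1)
    (r : R) : (taylor r p - p).coeff d = (d + 1) * p.leadingCoeff * r := by
  have htop : hasseDeriv d p = C (p.coeff d) + C ((d + 1) * p.coeff (d + 1)) * X := by
    ext n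
    rw [hasseDeriv_coeff]
    match n with
    | 0 => simp
    | 1 =>
      rw [add_comm 1 d, Nat.choose_succ_self_right]
      simp
    | k + 2 =>
      rw [coeff_eq_zero_of_natDegree_lt (by omega : p.natDegree < k + 2 + d)]
      simp [coeff_one]
  rw [coeff_taylor_sub_self, htop, leadingCoeff, hp]
  simp

end TaylorShift

lemma irrational_coeff_taylor_sub_self {p : ℝ[X]} {d : ℕ} (hp : p.natDegree = d + 1)
    (hirr : Irrational p.leadingCoeff) {h : ℕ} (hh : 0 < h) :
    Irrational ((taylor (h : ℝ) p - p).coeff d) := by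
  rw [coeff_taylor_sub_self_of_natDegree_eq_succ hp]
  simpa using (hirr.natCast_mul d.succ_ne_zero).mul_natCast hh.ne'

lemma hasUniformlySmallAverages_e_eval_of_natDegree_eq_one {p : ℝ[X]} (hp : p.natDegree = 1)
    (hirr : Irrational p.leadingCoeff) :
    HasUniformlySmallAverages (fun n => e (p.eval (n : ℝ))) := by
  have hlin : ∀ n : ℕ, e (p.eval (n : ℝ)) = e (p.coeff 0) * e p.leadingCoeff ^ n := by
    intro n
    rw [leadingCoeff, hp, ← e_natCast_mul, ← e_add]
    conv_lhs => rw [eq_X_add_C_of_natDegree_le_one hp.le]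
    simp only [eval_add, eval_mul, eval_C, eval_X]
    ring_nf
  have hz1 := e_ne_one hirr
  refine .of_norm_sum_le (2 / ‖e p.leadingCoeff - 1‖) fun M L => ?_
  simp_rw [hlin, ← mul_sum, norm_mul, norm_e, one_mul]
  exact norm_sum_range_pow_le (norm_e _).le hz1 M L

theorem hasUniformlySmallAverages_e_eval {p : ℝ[X]} (hdeg : 1 ≤ p.natDegree)
    (hirr : Irrational p.leadingCoeff) :
    HasUniformlySmallAverages (fun n => e (p.eval (n : ℝ))) := by
  obtain ⟨d, hd⟩ := Nat.exists_eq_add_of_le' hdeg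
  induction d generalizing p with
  | zero => exact hasUniformlySmallAverages_e_eval_of_natDegree_eq_one hd hirr
  | succ d ih =>
    refine .of_mul_conj_shift (fun n => (norm_e _).le) fun h hh => ?_
    have hq := irrational_coeff_taylor_sub_self hd hirr hh
    have hqdeg : (taylor (h : ℝ) p - p).natDegree = d + 1 :=
      le_antisymm (by simpa [hd] using natDegree_taylor_sub_self_le p h)
        (le_natDegree_of_ne_zero hq.ne_zero)
    convert ih (by omega) (by rwa [leadingCoeff, hqdeg]) hqdeg using 2 with n
    rw [e_mul_conj, eval_sub, taylor_eval]
    push_cast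
    ring_nf

end Weyl

/-- **Weyl's theorem, uniform version.** If `p` is a real polynomial of degree `≥ 1`
with irrational leading coefficient, then `(1/(N-M)) ∑_{n=M+1}^N e^{2πi p(n)} → 0` as
`N - M → ∞`. -/
theorem weyl_uniform (p : Polynomial ℝ) (hdeg : 1 ≤ p.natDegree)
    (hirr : Irrational p.leadingCoeff) :
    ∀ ε > (0 : ℝ), ∃ K : ℕ, ∀ M N : ℕ, M < N → K ≤ N - M →
      ‖∑ n ∈ Finset.Icc (M + 1) N,
          Complex.exp (2 * Real.pi * Complex.I * (p.eval (n : ℝ) : ℝ))‖ / ((N : ℝ) - M)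
        ≤ ε := by
  intro ε hε
  obtain ⟨K, hK⟩ := eventually_atTop.1 (Weyl.hasUniformlySmallAverages_e_eval hdeg hirr ε hε)
  refine ⟨K, fun M N hMN hKN => ?_⟩
  have hsum := hK (N - M) hKN (M + 1)
  rw [Nat.cast_sub hMN.le] at hsum
  rw [div_le_iff₀ (by simpa using hMN), ← Finset.Ico_add_one_right_eq_Icc,
    Finset.sum_Ico_eq_sum_range, Nat.add_sub_add_right]
  exact hsum
end
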